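/- arXiv:2004.14220 — 2 statements merged into one kernel-verified Lean document; each statement's English description precedes it below -/
import Mathlib

section
/- (Steiner) Let K be an augmented directed complex with basis B. If B is strongly loop-free, then B is loop-free. That is, if the preorder ≤_N on B generated by the relations 'x ≤_N y whenever x ∈ supp(d(y)₋) or y ∈ supp(d(x)₊)' is antisymmetric, then for every i ≥ 0 the preorder ≤_i on B generated by the relations 'x ≤_i y whenever |x| > i, |y| > i and supp(⟨x⟩¹_i) ∩ supp(⟨y⟩⁰_i) ≠ ∅' is antisymmetric. -/
/-- The negative part `z₋` of an element of the free abelian group `α →₀ ℤ`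
(with respect to the basis `α`): `z = z₊ - z₋` with disjoint supports. -/
noncomputable def fnegPart {α : Type*} (z : α →₀ ℤ) : α →₀ ℤ :=
  z.mapRange (fun t => max (-t) 0) (by simp)

/-- The positive part `z₊`. -/
noncomputable def fposPart {α : Type*} (z : α →₀ ℤ) : α →₀ ℤ :=
  z.mapRange (fun t => max t 0) (by simp)

/-- The lower source row `⟨x⟩⁰_k` of the atom table of `x ∈ K_i`:
`⟨x⟩⁰_i = x` and `⟨x⟩⁰_{k-1} = d(⟨x⟩⁰_k)₋` (value `0` for `k > i`). -/
noncomputable def atomNeg {B : ℕ → Type*} (d : ∀ n, (B (n + 1) →₀ ℤ) →+ (B n →₀ ℤ)) :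
    (i : ℕ) → (B i →₀ ℤ) → (k : ℕ) → (B k →₀ ℤ)
  | 0, x, k => if h : k = 0 then by subst h; exact x else 0
  | i + 1, x, k =>
      if h : k = i + 1 then by subst h; exact x
      else atomNeg d i (fnegPart (d i x)) k

/-- The upper target row `⟨x⟩¹_k` of the atom table of `x ∈ K_i`:
`⟨x⟩¹_i = x` and `⟨x⟩¹_{k-1} = d(⟨x⟩¹_k)₊` (value `0` for `k > i`). -/
noncomputable def atomPos {B : ℕ → Type*} (d : ∀ n, (B (n + 1) →₀ ℤ) →+ (B n →₀ ℤ)) :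
    (i : ℕ) → (B i →₀ ℤ) → (k : ℕ) → (B k →₀ ℤ)
  | 0, x, k => if h : k = 0 then by subst h; exact x else 0
  | i + 1, x, k =>
      if h : k = i + 1 then by subst h; exact x
      else atomPos d i (fposPart (d i x)) k

/-- The elementary relation generating the preorder `≤_N` on the graded basis
`Σ n, B n`: `x ≤_N y` whenever `x ∈ supp (d y)₋` or `y ∈ supp (d x)₊`
(with `d b = 0` for `b` of degree `0`). -/
def relN {B : ℕ → Type*} (d : ∀ n, (B (n + 1) →₀ ℤ) →+ (B n →₀ ℤ))
    (x y : Σ n, B n) : Prop :=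
  (∃ h : y.1 = x.1 + 1, fnegPart (d x.1 (Finsupp.single (h ▸ y.2) 1)) x.2 ≠ 0) ∨
  (∃ h : x.1 = y.1 + 1, fposPart (d y.1 (Finsupp.single (h ▸ x.2) 1)) y.2 ≠ 0)

/-- The elementary relation generating the preorder `≤_i` on the graded basis:
`x ≤_i y` whenever `|x| > i`, `|y| > i` and
`supp ⟨x⟩¹_i ∩ supp ⟨y⟩⁰_i ≠ ∅`. -/
def relI {B : ℕ → Type*} (d : ∀ n, (B (n + 1) →₀ ℤ) →+ (B n →₀ ℤ)) (i : ℕ)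
    (x y : Σ n, B n) : Prop :=
  i < x.1 ∧ i < y.1 ∧
    ∃ b : B i, atomPos d x.1 (Finsupp.single x.2 1) i b ≠ 0 ∧
      atomNeg d y.1 (Finsupp.single y.2 1) i b ≠ 0

/-!
A step `x ≤_i y` is witnessed by some `b ∈ supp ⟨x⟩¹_i ∩ supp ⟨y⟩⁰_i`. For `z ≥ 0`, a non-zero
coefficient of `(d z)₊` (resp. `(d z)₋`) is already non-zero in `(d a)₊` (resp. `(d a)₋`) for some
`a ∈ supp z`. Tracing `b` up the atom tables of `x` and `y` in this way gives chains
`x ≤_N ⋯ ≤_N b ≤_N ⋯ ≤_N y`, so `≤_i` is contained in `≤_N` and inherits its antisymmetry.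
-/

section PosNegPart

variable {α : Type*}

lemma fposPart_apply_ne_zero_iff (z : α →₀ ℤ) (b : α) : fposPart z b ≠ 0 ↔ 0 < z b := by
  rw [fposPart, Finsupp.mapRange_apply]
  omega

lemma fnegPart_apply_ne_zero_iff (z : α →₀ ℤ) (b : α) : fnegPart z b ≠ 0 ↔ z b < 0 := by
  rw [fnegPart, Finsupp.mapRange_apply]
  omega

lemma fposPart_nonneg (z : α →₀ ℤ) : 0 ≤ fposPart z :=
  Finsupp.le_def.mpr fun _ => by simp [fposPart]

lemma fnegPart_nonneg (z : α →₀ ℤ) : 0 ≤ fnegPart z :=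
  Finsupp.le_def.mpr fun _ => by simp [fnegPart]

end PosNegPart

section LinearCombination

variable {α β : Type*}

lemma AddMonoidHom.finsupp_apply_eq_sum (f : (α →₀ ℤ) →+ (β →₀ ℤ)) (z : α →₀ ℤ) (b : β) :
    f z b = ∑ a ∈ z.support, z a * f (Finsupp.single a 1) b := by
  conv_lhs => rw [← Finsupp.sum_single z]
  rw [map_finsuppSum, Finsupp.sum_apply, Finsupp.sum]
  refine Finset.sum_congr rfl fun a _ => ?_
  rw [← Finsupp.smul_single_one a (z a), map_zsmul, Finsupp.smul_apply, smul_eq_mul]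

lemma AddMonoidHom.exists_mem_support_single_pos (f : (α →₀ ℤ) →+ (β →₀ ℤ))
    {z : α →₀ ℤ} (hz : 0 ≤ z) {b : β} (hb : 0 < f z b) :
    ∃ a ∈ z.support, 0 < f (Finsupp.single a 1) b := by
  by_contra! h
  have : f z b ≤ 0 := by
    rw [f.finsupp_apply_eq_sum]
    exact Finset.sum_nonpos fun a ha => mul_nonpos_of_nonneg_of_nonpos (hz a) (h a ha)
  omega

lemma AddMonoidHom.exists_mem_support_single_neg (f : (α →₀ ℤ) →+ (β →₀ ℤ))
    {z : α →₀ ℤ} (hz : 0 ≤ z) {b : β} (hb : f z b < 0) :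
    ∃ a ∈ z.support, f (Finsupp.single a 1) b < 0 := by
  obtain ⟨a, ha, hpos⟩ := (-f).exists_mem_support_single_pos hz (b := b) (by simpa using hb)
  exact ⟨a, ha, by simpa using hpos⟩

end LinearCombination

section AtomTable

variable {B : ℕ → Type*} (d : ∀ n, (B (n + 1) →₀ ℤ) →+ (B n →₀ ℤ))

lemma atomPos_self : ∀ (i : ℕ) (z : B i →₀ ℤ), atomPos d i z i = z
  | 0, _ | _ + 1, _ => by simp [atomPos]

lemma atomNeg_self : ∀ (i : ℕ) (z : B i →₀ ℤ), atomNeg d i z i = z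
  | 0, _ | _ + 1, _ => by simp [atomNeg]

lemma atomPos_of_ne (i : ℕ) (z : B (i + 1) →₀ ℤ) {k : ℕ} (hk : k ≠ i + 1) :
    atomPos d (i + 1) z k = atomPos d i (fposPart (d i z)) k := by
  simp [atomPos, hk]

lemma atomNeg_of_ne (i : ℕ) (z : B (i + 1) →₀ ℤ) {k : ℕ} (hk : k ≠ i + 1) :
    atomNeg d (i + 1) z k = atomNeg d i (fnegPart (d i z)) k := by
  simp [atomNeg, hk]

lemma atomPos_zero_of_ne (z : B 0 →₀ ℤ) {k : ℕ} (hk : k ≠ 0) : atomPos d 0 z k = 0 := by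
  simp [atomPos, hk]

lemma atomNeg_zero_of_ne (z : B 0 →₀ ℤ) {k : ℕ} (hk : k ≠ 0) : atomNeg d 0 z k = 0 := by
  simp [atomNeg, hk]

lemma exists_relN_chain_of_atomPos_ne_zero :
    ∀ (i : ℕ) {z : B i →₀ ℤ}, 0 ≤ z → ∀ {k : ℕ} {b : B k}, atomPos d i z k b ≠ 0 →
      ∃ a ∈ z.support, Relation.ReflTransGen (relN d) ⟨i, a⟩ ⟨k, b⟩
  | 0, z, _, k, b, hb => by
    obtain rfl : k = 0 := by
      by_contra hk
      simp [atomPos_zero_of_ne d z hk] at hb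
    rw [atomPos_self] at hb
    exact ⟨b, Finsupp.mem_support_iff.mpr hb, .refl⟩
  | i + 1, z, hz, k, b, hb => by
    by_cases hk : k = i + 1
    · subst hk
      rw [atomPos_self] at hb
      exact ⟨b, Finsupp.mem_support_iff.mpr hb, .refl⟩
    rw [atomPos_of_ne d i z hk] at hb
    obtain ⟨c, hc, hcb⟩ := exists_relN_chain_of_atomPos_ne_zero i (fposPart_nonneg _) hb
    have hc : 0 < d i z c := (fposPart_apply_ne_zero_iff _ _).mp (Finsupp.mem_support_iff.mp hc)
    obtain ⟨a, ha, hac⟩ := (d i).exists_mem_support_single_pos hz hc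
    have hac : relN d ⟨i + 1, a⟩ ⟨i, c⟩ := .inr ⟨rfl, (fposPart_apply_ne_zero_iff _ _).mpr hac⟩
    exact ⟨a, ha, .head hac hcb⟩

lemma exists_relN_chain_of_atomNeg_ne_zero :
    ∀ (i : ℕ) {z : B i →₀ ℤ}, 0 ≤ z → ∀ {k : ℕ} {b : B k}, atomNeg d i z k b ≠ 0 →
      ∃ a ∈ z.support, Relation.ReflTransGen (relN d) ⟨k, b⟩ ⟨i, a⟩
  | 0, z, _, k, b, hb => by
    obtain rfl : k = 0 := by
      by_contra hk
      simp [atomNeg_zero_of_ne d z hk] at hb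
    rw [atomNeg_self] at hb
    exact ⟨b, Finsupp.mem_support_iff.mpr hb, .refl⟩
  | i + 1, z, hz, k, b, hb => by
    by_cases hk : k = i + 1
    · subst hk
      rw [atomNeg_self] at hb
      exact ⟨b, Finsupp.mem_support_iff.mpr hb, .refl⟩
    rw [atomNeg_of_ne d i z hk] at hb
    obtain ⟨c, hc, hbc⟩ := exists_relN_chain_of_atomNeg_ne_zero i (fnegPart_nonneg _) hb
    have hc : d i z c < 0 := (fnegPart_apply_ne_zero_iff _ _).mp (Finsupp.mem_support_iff.mp hc)
    obtain ⟨a, ha, hca⟩ := (d i).exists_mem_support_single_neg hz hc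
    have hca : relN d ⟨i, c⟩ ⟨i + 1, a⟩ := .inl ⟨rfl, (fnegPart_apply_ne_zero_iff _ _).mpr hca⟩
    exact ⟨a, ha, .tail hbc hca⟩

lemma reflTransGen_relN_of_relI {i : ℕ} {x y : Σ n, B n} (h : relI d i x y) :
    Relation.ReflTransGen (relN d) x y := by
  obtain ⟨-, -, b, hxb, hby⟩ := h
  obtain ⟨a, ha, hab⟩ :=
    exists_relN_chain_of_atomPos_ne_zero d x.1 (Finsupp.single_nonneg.mpr zero_le_one) hxb
  obtain ⟨c, hc, hbc⟩ :=
    exists_relN_chain_of_atomNeg_ne_zero d y.1 (Finsupp.single_nonneg.mpr zero_le_one) hby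
  obtain rfl := Finset.mem_singleton.mp (Finsupp.support_single_subset ha)
  obtain rfl := Finset.mem_singleton.mp (Finsupp.support_single_subset hc)
  exact hab.trans hbc

end AtomTable

theorem strongly_loop_free_is_loop_free_general {B : ℕ → Type*}
    (d : ∀ n, (B (n + 1) →₀ ℤ) →+ (B n →₀ ℤ))
    (hstrong : ∀ x y : Σ n, B n, Relation.ReflTransGen (relN d) x y →
      Relation.ReflTransGen (relN d) y x → x = y) :
    ∀ (i : ℕ) (x y : Σ n, B n), Relation.ReflTransGen (relI d i) x y →
      Relation.ReflTransGen (relI d i) y x → x = y := by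
  intro i x y hxy hyx
  have hle : Relation.ReflTransGen (relI d i) ≤ Relation.ReflTransGen (relN d) :=
    Relation.reflTransGen_closed fun _ _ => reflTransGen_relN_of_relI d
  exact hstrong x y (hle _ _ hxy) (hle _ _ hyx)

/-- (Steiner) A strongly loop-free basis of an augmented directed complex is
loop-free: if the preorder generated by `relN` on the graded basis is
antisymmetric, then for every `i` the preorder generated by `relI i` is
antisymmetric.  Here the complex with basis `B` has `K_n = B n →₀ ℤ`,
differential `d` with `d ∘ d = 0` and augmentation `e` with `e ∘ d₁ = 0`. -/
theorem strongly_loop_free_is_loop_free {B : ℕ → Type*}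
    (d : ∀ n, (B (n + 1) →₀ ℤ) →+ (B n →₀ ℤ))
    (hdd : ∀ n x, d n (d (n + 1) x) = 0)
    (e : (B 0 →₀ ℤ) →+ ℤ) (he : ∀ x, e (d 0 x) = 0)
    (hstrong : ∀ x y : Σ n, B n, Relation.ReflTransGen (relN d) x y →
      Relation.ReflTransGen (relN d) y x → x = y) :
    ∀ (i : ℕ) (x y : Σ n, B n), Relation.ReflTransGen (relI d i) x y →
      Relation.ReflTransGen (relI d i) y x → x = y :=
  strongly_loop_free_is_loop_free_general d hstrong
end

section
/- Let K be an augmented directed complex and let x and y be i-cells of ν(K) that are j-composable for some 0 ≤ j < i, i.e., x^ε_k = y^ε_k for all k < j and ε ∈ {0,1}, and x⁰_j = y¹_j. Then the matrix z defined by z⁰_k = y⁰_k and z¹_k = x¹_k for k ≤ j, and z^ε_k = x^ε_k + y^ε_k for j < k ≤ i, is again an i-cell of ν(K); moreover its j-source equals the j-source of y and its j-target equals the j-target of x. -/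
/-!
Positivity is preserved because the submonoids are closed under addition, and the boundary
conditions are additive; the only interesting degree is `j`, where
`d(x⁰_{j+1} + y⁰_{j+1}) = (x¹_j - x⁰_j) + (y¹_j - y⁰_j) = x¹_j - y⁰_j` because `x⁰_j = y¹_j`.
-/

/-- An augmented directed complex is given by abelian groups `K n`,
differentials `d`, an augmentation `e` and positivity submonoids `M`.
`ADCCell M d e i x0 x1` says that the table with rows `x0` (sources) and `x1`
(targets), with entries `x0 k = x1 k = 0` for `k > i`, is an `i`-cell of
Steiner's ω-category `ν(K)`. -/
def ADCCell {K : ℕ → Type*} [∀ n, AddCommGroup (K n)]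
    (M : ∀ n, AddSubmonoid (K n)) (d : ∀ n, K (n + 1) →+ K n) (e : K 0 →+ ℤ)
    (i : ℕ) (x0 x1 : ∀ k, K k) : Prop :=
  (∀ k, k ≤ i → x0 k ∈ M k ∧ x1 k ∈ M k) ∧
  (∀ k, k < i → d k (x0 (k + 1)) = x1 k - x0 k ∧ d k (x1 (k + 1)) = x1 k - x0 k) ∧
  e (x0 0) = 1 ∧ e (x1 0) = 1 ∧ x0 i = x1 i ∧ (∀ k, i < k → x0 k = 0 ∧ x1 k = 0)

/-- The `j`-source of a cell: truncate at level `j` and replace the last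
column by the doubled entry `x0 j`. -/
def cellSrc {K : ℕ → Type*} [∀ n, AddCommGroup (K n)] (j : ℕ)
    (x0 x1 : ∀ k, K k) : (∀ k, K k) × (∀ k, K k) :=
  (fun k => if k ≤ j then x0 k else 0,
   fun k => if k < j then x1 k else if k = j then x0 k else 0)

/-- The `j`-target of a cell: truncate at level `j` and replace the last
column by the doubled entry `x1 j`. -/
def cellTgt {K : ℕ → Type*} [∀ n, AddCommGroup (K n)] (j : ℕ)
    (x0 x1 : ∀ k, K k) : (∀ k, K k) × (∀ k, K k) :=
  (fun k => if k < j then x0 k else if k = j then x1 k else 0,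
   fun k => if k ≤ j then x1 k else 0)

theorem cellSrc_congr {K : ℕ → Type*} [∀ n, AddCommGroup (K n)] {j : ℕ}
    {x0 x1 y0 y1 : ∀ k, K k}
    (h0 : ∀ k, k ≤ j → x0 k = y0 k) (h1 : ∀ k, k < j → x1 k = y1 k) :
    cellSrc j x0 x1 = cellSrc j y0 y1 := by
  unfold cellSrc
  refine Prod.ext (funext fun k => ?_) (funext fun k => ?_) <;> dsimp only
  · split_ifs with hk
    exacts [h0 k hk, rfl]
  · split_ifs with hk hk'
    exacts [h1 k hk, h0 k hk'.le, rfl]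

theorem cellTgt_congr {K : ℕ → Type*} [∀ n, AddCommGroup (K n)] {j : ℕ}
    {x0 x1 y0 y1 : ∀ k, K k}
    (h0 : ∀ k, k < j → x0 k = y0 k) (h1 : ∀ k, k ≤ j → x1 k = y1 k) :
    cellTgt j x0 x1 = cellTgt j y0 y1 := by
  unfold cellTgt
  refine Prod.ext (funext fun k => ?_) (funext fun k => ?_) <;> dsimp only
  · split_ifs with hk hk'
    exacts [h0 k hk, h1 k hk'.le, rfl]
  · split_ifs with hk
    exacts [h1 k hk, rfl]

namespace ADCCell

variable {K : ℕ → Type*}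

def splice (j : ℕ) (a b : ∀ k, K k) : ∀ k, K k := fun k => if k ≤ j then a k else b k

section splice

variable {j k : ℕ} {a b : ∀ k, K k}

theorem splice_of_le (h : k ≤ j) : splice j a b k = a k := if_pos h

theorem splice_of_lt (h : j < k) : splice j a b k = b k := if_neg (Nat.not_le.2 h)

end splice

variable [∀ n, AddCommGroup (K n)]

variable {M : ∀ n, AddSubmonoid (K n)} {d : ∀ n, K (n + 1) →+ K n} {e : K 0 →+ ℤ}
  {i j : ℕ} {x0 x1 y0 y1 : ∀ k, K k}

theorem boundary_comp (hx : ADCCell M d e i x0 x1) (hy : ADCCell M d e i y0 y1)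
    (hlow : ∀ k, k < j → x0 k = y0 k ∧ x1 k = y1 k) (hmid : x0 j = y1 j) {k : ℕ} (hk : k < i) :
    d k (splice j y0 (x0 + y0) (k + 1)) =
        splice j x1 (x1 + y1) k - splice j y0 (x0 + y0) k ∧
      d k (splice j x1 (x1 + y1) (k + 1)) =
        splice j x1 (x1 + y1) k - splice j y0 (x0 + y0) k := by
  obtain ⟨hx0, hx1⟩ := hx.2.1 k hk
  obtain ⟨hy0, hy1⟩ := hy.2.1 k hk
  rcases lt_trichotomy k j with hkj | rfl | hjk
  · rw [splice_of_le hkj, splice_of_le hkj, splice_of_le hkj.le, splice_of_le hkj.le, hy0, hx1,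
      (hlow k hkj).1, (hlow k hkj).2]
    exact ⟨rfl, rfl⟩
  · rw [splice_of_lt k.lt_succ_self, splice_of_lt k.lt_succ_self, splice_of_le le_rfl,
      splice_of_le le_rfl]
    simp only [Pi.add_apply, map_add, hx0, hx1, hy0, hy1, hmid]
    constructor <;> abel
  · rw [splice_of_lt (hjk.trans k.lt_succ_self), splice_of_lt (hjk.trans k.lt_succ_self),
      splice_of_lt hjk, splice_of_lt hjk]
    simp only [Pi.add_apply, map_add, hx0, hx1, hy0, hy1]
    constructor <;> abel

theorem comp (hj : j < i) (hx : ADCCell M d e i x0 x1) (hy : ADCCell M d e i y0 y1)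
    (hlow : ∀ k, k < j → x0 k = y0 k ∧ x1 k = y1 k) (hmid : x0 j = y1 j) :
    ADCCell M d e i (splice j y0 (x0 + y0)) (splice j x1 (x1 + y1)) := by
  have ⟨hxM, _, _, hxe1, hxtop, hxzero⟩ := hx
  have ⟨hyM, _, hye0, _, hytop, hyzero⟩ := hy
  refine ⟨fun k hk => ?_, fun k hk => boundary_comp hx hy hlow hmid hk, ?_, ?_, ?_,
    fun k hk => ?_⟩
  · by_cases hkj : k ≤ j
    · rw [splice_of_le hkj, splice_of_le hkj]
      exact ⟨(hyM k hk).1, (hxM k hk).2⟩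
    · rw [splice_of_lt (Nat.lt_of_not_le hkj), splice_of_lt (Nat.lt_of_not_le hkj)]
      exact ⟨add_mem (hxM k hk).1 (hyM k hk).1, add_mem (hxM k hk).2 (hyM k hk).2⟩
  · rwa [splice_of_le (Nat.zero_le j)]
  · rwa [splice_of_le (Nat.zero_le j)]
  · rw [splice_of_lt hj, splice_of_lt hj, Pi.add_apply, Pi.add_apply, hxtop, hytop]
  · rw [splice_of_lt (hj.trans hk), splice_of_lt (hj.trans hk), Pi.add_apply, Pi.add_apply,
      (hxzero k hk).1, (hyzero k hk).1, (hxzero k hk).2, (hyzero k hk).2, add_zero]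
    exact ⟨rfl, rfl⟩

end ADCCell

theorem cellComp_isCell_general {K : ℕ → Type*} [∀ n, AddCommGroup (K n)]
    (M : ∀ n, AddSubmonoid (K n)) (d : ∀ n, K (n + 1) →+ K n)
    (e : K 0 →+ ℤ)
    {i j : ℕ} (hj : j < i) (x0 x1 y0 y1 : ∀ k, K k)
    (hx : ADCCell M d e i x0 x1) (hy : ADCCell M d e i y0 y1)
    (hlow : ∀ k, k < j → x0 k = y0 k ∧ x1 k = y1 k) (hmid : x0 j = y1 j) :
    ADCCell M d e i (fun k => if k ≤ j then y0 k else x0 k + y0 k)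
        (fun k => if k ≤ j then x1 k else x1 k + y1 k) ∧
      cellSrc j (fun k => if k ≤ j then y0 k else x0 k + y0 k)
          (fun k => if k ≤ j then x1 k else x1 k + y1 k) = cellSrc j y0 y1 ∧
      cellTgt j (fun k => if k ≤ j then y0 k else x0 k + y0 k)
          (fun k => if k ≤ j then x1 k else x1 k + y1 k) = cellTgt j x0 x1 := by
  refine ⟨ADCCell.comp hj hx hy hlow hmid, ?_, ?_⟩
  · exact cellSrc_congr (fun k hk => if_pos hk)
      (fun k hk => (if_pos hk.le).trans (hlow k hk).2)
  · exact cellTgt_congr (fun k hk => (if_pos hk.le).trans (hlow k hk).1.symm)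
      (fun k hk => if_pos hk)

/-- If `x` and `y` are `j`-composable `i`-cells of `ν(K)` (they agree in
degrees `< j` and `x0 j = y1 j`), then the table `z` with `z⁰_k = y⁰_k`,
`z¹_k = x¹_k` for `k ≤ j` and `z^ε_k = x^ε_k + y^ε_k` for `k > j` is again an
`i`-cell, whose `j`-source is that of `y` and whose `j`-target is that of
`x`. -/
theorem cellComp_isCell {K : ℕ → Type*} [∀ n, AddCommGroup (K n)]
    (M : ∀ n, AddSubmonoid (K n)) (d : ∀ n, K (n + 1) →+ K n)
    (hdd : ∀ n x, d n (d (n + 1) x) = 0) (e : K 0 →+ ℤ)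
    (he : ∀ x, e (d 0 x) = 0)
    {i j : ℕ} (hj : j < i) (x0 x1 y0 y1 : ∀ k, K k)
    (hx : ADCCell M d e i x0 x1) (hy : ADCCell M d e i y0 y1)
    (hlow : ∀ k, k < j → x0 k = y0 k ∧ x1 k = y1 k) (hmid : x0 j = y1 j) :
    ADCCell M d e i (fun k => if k ≤ j then y0 k else x0 k + y0 k)
        (fun k => if k ≤ j then x1 k else x1 k + y1 k) ∧
      cellSrc j (fun k => if k ≤ j then y0 k else x0 k + y0 k)
          (fun k => if k ≤ j then x1 k else x1 k + y1 k) = cellSrc j y0 y1 ∧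
      cellTgt j (fun k => if k ≤ j then y0 k else x0 k + y0 k)
          (fun k => if k ≤ j then x1 k else x1 k + y1 k) = cellTgt j x0 x1 :=
  cellComp_isCell_general M d e hj x0 x1 y0 y1 hx hy hlow hmid
end
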